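/- Let (M, H, J, P) be a standard form of a σ-finite von Neumann algebra M and let ξ₀ ∈ P be a cyclic and separating vector for M. Suppose (S_n) is a net of completely positive operators on H with S_n → 1_H in the strong operator topology. Then there exists a net (S′_n) of completely positive operators on H such that: (1) S′_n → 1_H in the strong operator topology; (2) S′_n − S_n has rank one for every n; (3) ‖S′_n − S_n‖ → 0; (4) S′_n ξ₀ is a cyclic and separating vector for M for every n. In particular, if moreover each S_n is a compact contraction, then there exists a net (T_n) of compact completely positive contractions on H with T_n → 1_H in the strong operator topology such that T_n ξ₀ is cyclic and separating for every n. -/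

import Mathlib

open scoped ComplexOrder
open Filter Topology

noncomputable section

universe u v

/-- A net indexed by a nonempty directed preorder. -/
structure Net (α : Type v) : Type (max (u + 1) v) where
  ι : Type u
  [pre : Preorder ι]
  [ne : Nonempty ι]
  directed : ∀ a b : ι, ∃ c : ι, a ≤ c ∧ b ≤ c
  f : ι → α

attribute [instance] Net.pre Net.ne

/-- A standard form `(M, H, J, P)` of a von Neumann algebra: `J` is a conjugate-linear
isometric involution, `P` a closed self-dual convex cone, with the Haagerup axioms. -/
structure StandardForm (H : Type u) [NormedAddCommGroup H] [InnerProductSpace ℂ H]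
    [CompleteSpace H] where
  M : VonNeumannAlgebra H
  J : H →ₗ⋆[ℂ] H
  P : Set H
  isometry_J : ∀ ξ : H, ‖J ξ‖ = ‖ξ‖
  involutive_J : ∀ ξ : H, J (J ξ) = ξ
  closed_P : IsClosed P
  convex_P : Convex ℝ P
  cone_P : ∀ c : ℝ, 0 ≤ c → ∀ ξ ∈ P, c • ξ ∈ P
  selfdual_P : P = {ξ : H | ∀ η ∈ P, 0 ≤ (inner ℂ ξ η : ℂ)}
  commutant_JMJ : ∀ y : H →L[ℂ] H,
    y ∈ M.commutant ↔ ∃ x ∈ M, ∀ ξ : H, y ξ = J (x (J ξ))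
  J_fix_P : ∀ ξ ∈ P, J ξ = ξ
  xJxJ_P : ∀ x : H →L[ℂ] H, x ∈ M → ∀ ξ ∈ P, x (J (x (J ξ))) ∈ P
  center_JcJ : ∀ c : H →L[ℂ] H, c ∈ M → c ∈ M.commutant →
    ∀ ξ : H, J (c (J ξ)) = star c ξ

variable {H : Type u} [NormedAddCommGroup H] [InnerProductSpace ℂ H] [CompleteSpace H]
variable {H₁ : Type u} [NormedAddCommGroup H₁] [InnerProductSpace ℂ H₁] [CompleteSpace H₁]
variable {H₂ : Type v} [NormedAddCommGroup H₂] [InnerProductSpace ℂ H₂] [CompleteSpace H₂]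

/-- The matrix cone `P^(n) ⊆ Mₙ(H)`: all `[ξ i j]` such that
`∑ i j, x i • J (x j (J (ξ i j))) ∈ P` for all `x : Fin n → M`. -/
def StandardForm.matrixCone (SF : StandardForm H) (n : ℕ) :
    Set (Matrix (Fin n) (Fin n) H) :=
  {ξ | ∀ x : Fin n → (H →L[ℂ] H), (∀ i, x i ∈ SF.M) →
    (∑ i : Fin n, ∑ j : Fin n, (x i) (SF.J ((x j) (SF.J (ξ i j))))) ∈ SF.P}

/-- Complete positivity of a bounded operator between the Hilbert spaces of two standard
forms: the amplification maps `P₁^(n)` into `P₂^(n)` for every `n`. -/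
def IsCompletelyPositive (SF₁ : StandardForm H₁) (SF₂ : StandardForm H₂)
    (T : H₁ →L[ℂ] H₂) : Prop :=
  ∀ n : ℕ, ∀ ξ ∈ SF₁.matrixCone n,
    (Matrix.of fun i j => T (ξ i j)) ∈ SF₂.matrixCone n

/-- The Haagerup approximation property relative to a given standard form: there is a net of
compact completely positive contractions converging to the identity in the strong operator
topology. -/
def StandardForm.HAP (SF : StandardForm H) : Prop :=
  ∃ T : Net.{u} (H →L[ℂ] H),
    (∀ n, IsCompactOperator ⇑(T.f n) ∧ ‖T.f n‖ ≤ 1 ∧ IsCompletelyPositive SF SF (T.f n)) ∧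
    ∀ ξ : H, Tendsto (fun n => T.f n ξ) atTop (𝓝 ξ)

/-- A bundled complex Hilbert space. -/
structure HilbertC : Type (u + 1) where
  carrier : Type u
  [nacg : NormedAddCommGroup carrier]
  [ips : InnerProductSpace ℂ carrier]
  [cs : CompleteSpace carrier]

attribute [instance] HilbertC.nacg HilbertC.ips HilbertC.cs

/-- A von Neumann algebra has the Haagerup approximation property if there exist a standard
form of (an isomorphic copy of) it and a net of compact completely positive contractions
converging to the identity in the strong operator topology. -/
def VonNeumannAlgebra.HAP {K : Type u} [NormedAddCommGroup K] [InnerProductSpace ℂ K]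
    [CompleteSpace K] (M : VonNeumannAlgebra K) : Prop :=
  ∃ (X : HilbertC.{u}) (SF : StandardForm X.carrier)
    (_ : M.toStarSubalgebra ≃⋆ₐ[ℂ] SF.M.toStarSubalgebra), SF.HAP

/-!
Put `S'ₙ = Sₙ + cₙ θ` with `θ = ⟪ξ₀, ·⟫ ξ₀` and `cₙ ‖ξ₀‖² = δₙ := ‖Sₙ ξ₀ - ξ₀‖ → 0`. The rank-one
map `θ` is completely positive because the matrix `⟪ξ₀, ξᵢⱼ⟫` is positive semidefinite for
`[ξᵢⱼ] ∈ P⁽ⁿ⁾`, so `S'ₙ` is completely positive and `S'ₙ ξ₀ = η + δₙ ξ₀` with `η = Sₙ ξ₀ ∈ P`.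
For `δ > 0` such a vector `ζ` is separating: if `x ζ = 0` then `x J x J ζ = J x J x ζ = 0`, and as
`x J x J η` and `x J x J ξ₀` lie in the cone `P`, which is pointed, `x J x J ξ₀ = 0`; a
polarization in `P` then gives `x ξ₀ = 0`. Since `J ζ = ζ`, `ζ` is also separating for
`M' = J M J`, hence cyclic for `M`. Rescaling `S'ₙ` by `(1 + δₙ)⁻¹` gives the contractions.
-/

theorem tendsto_apply_of_tendsto_norm_sub {𝕜 E F ι : Type*} [NontriviallyNormedField 𝕜]
    [NormedAddCommGroup E] [NormedSpace 𝕜 E] [NormedAddCommGroup F] [NormedSpace 𝕜 F]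
    {l : Filter ι} {A B : ι → E →L[𝕜] F} {x : E} {y : F}
    (hB : Tendsto (fun i => B i x) l (𝓝 y)) (hAB : Tendsto (fun i => ‖A i - B i‖) l (𝓝 0)) :
    Tendsto (fun i => A i x) l (𝓝 y) := by
  have h : Tendsto (fun i => (A i - B i) x) l (𝓝 0) :=
    squeeze_zero_norm (fun i => (A i - B i).le_opNorm x) (by simpa using hAB.mul_const ‖x‖)
  simpa using hB.add h

-- Over `ℂ` the Hermitian condition follows from the nonnegativity of the quadratic form.
open Matrix in
theorem Matrix.posSemidef_of_dotProduct_mulVec_nonneg {n : Type*} [Fintype n]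
    {A : Matrix n n ℂ} (h : ∀ v, 0 ≤ star v ⬝ᵥ (A *ᵥ v)) : A.PosSemidef := by
  classical
  rw [← Matrix.isPositive_toEuclideanLin_iff, LinearMap.isPositive_iff_complex]
  intro v
  have he : (inner ℂ (A.toEuclideanLin v) v : ℂ) =
      star (star (WithLp.ofLp v) ⬝ᵥ (A *ᵥ WithLp.ofLp v)) := by
    rw [EuclideanSpace.inner_eq_star_dotProduct, star_dotProduct, star_star, dotProduct_comm]
    rfl
  obtain ⟨hre, him⟩ := Complex.le_def.mp (h (WithLp.ofLp v))
  rw [he, Complex.star_def]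
  exact ⟨Complex.ext (by simp) (by simp [← him]), hre⟩

section RankOne

variable {E F : Type*} [NormedAddCommGroup E] [InnerProductSpace ℂ E] [NormedAddCommGroup F]
  [InnerProductSpace ℂ F]

theorem isCompactOperator_rankOne (ζ : E) (η : F) :
    IsCompactOperator (InnerProductSpace.rankOne ℂ ζ η) := by
  rw [InnerProductSpace.rankOne_def']
  exact (isCompactOperator_of_locallyCompactSpace_dom (innerSL ℂ η)).clm_comp
    (ContinuousLinearMap.toSpanSingleton ℂ ζ)

end RankOne

namespace VonNeumannAlgebra

variable (M : VonNeumannAlgebra H)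

def IsCyclicVector (ζ : H) : Prop := Dense {η : H | ∃ x ∈ M, η = x ζ}

def IsSeparatingVector (ζ : H) : Prop := ∀ x : H →L[ℂ] H, x ∈ M → x ζ = 0 → x = 0

variable {M}

theorem IsSeparatingVector.smul {ζ : H} (hζ : M.IsSeparatingVector ζ) {a : ℂ} (ha : a ≠ 0) :
    M.IsSeparatingVector (a • ζ) := fun x hx hxζ =>
  hζ x hx <| (smul_eq_zero.mp (x.map_smul a ζ ▸ hxζ)).resolve_left ha

theorem IsCyclicVector.smul {ζ : H} (hζ : M.IsCyclicVector ζ) {a : ℂ} (ha : a ≠ 0) :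
    M.IsCyclicVector (a • ζ) := by
  have horbit : {η : H | ∃ x ∈ M, η = x (a • ζ)} = {η : H | ∃ x ∈ M, η = x ζ} := by
    ext η
    constructor
    · rintro ⟨x, hx, rfl⟩
      exact ⟨a • x, M.toStarSubalgebra.smul_mem hx a, by simp⟩
    · rintro ⟨x, hx, rfl⟩
      exact ⟨a⁻¹ • x, M.toStarSubalgebra.smul_mem hx a⁻¹, by simp [smul_smul, ha]⟩
  rw [IsCyclicVector, horbit]
  exact hζ

theorem starProjection_mem_commutant (K : Submodule ℂ H) [K.HasOrthogonalProjection]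
    (hK : ∀ x ∈ M, ∀ v ∈ K, x v ∈ K) : K.starProjection ∈ M.commutant := by
  rw [mem_commutant_iff]
  intro x hx
  ext ξ
  change x (K.starProjection ξ) = K.starProjection (x ξ)
  refine (K.eq_starProjection_of_mem_orthogonal (hK x hx _ (K.starProjection_apply_mem ξ)) ?_).symm
  rw [← map_sub, Submodule.mem_orthogonal]
  intro u hu
  rw [← ContinuousLinearMap.adjoint_inner_left, ← ContinuousLinearMap.star_eq_adjoint]
  exact (Submodule.mem_orthogonal _ _).mp (K.sub_starProjection_mem_orthogonal ξ) _
    (hK _ (star_mem hx) u hu)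

theorem isCyclicVector_of_isSeparatingVector_commutant {ζ : H}
    (hζ : M.commutant.IsSeparatingVector ζ) : M.IsCyclicVector ζ := by
  let W : Submodule ℂ H :=
    { carrier := {η : H | ∃ x ∈ M, η = x ζ}
      zero_mem' := ⟨0, zero_mem _, rfl⟩
      add_mem' := by
        rintro _ _ ⟨x, hx, rfl⟩ ⟨y, hy, rfl⟩
        exact ⟨x + y, add_mem hx hy, rfl⟩
      smul_mem' := by
        rintro a _ ⟨x, hx, rfl⟩
        exact ⟨a • x, M.toStarSubalgebra.smul_mem hx a, rfl⟩ }
  let K := W.topologicalClosure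
  have hK : ∀ x ∈ M, ∀ v ∈ K, x v ∈ K := by
    intro x hx v hv
    refine closure_mono ?_ (image_closure_subset_closure_image x.continuous ⟨v, hv, rfl⟩)
    rintro _ ⟨_, ⟨y, hy, rfl⟩, rfl⟩
    exact ⟨x * y, mul_mem hx hy, rfl⟩
  have hζK : ζ ∈ K := W.le_topologicalClosure ⟨1, one_mem _, rfl⟩
  have hp : 1 - K.starProjection = 0 := by
    refine hζ _ (sub_mem (one_mem _) (starProjection_mem_commutant K hK)) ?_
    simp [K.starProjection_eq_self_iff.mpr hζK]
  have hKtop : K = ⊤ := by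
    rw [eq_top_iff]
    intro ξ _
    have hξ : ξ - K.starProjection ξ = 0 := by simpa using DFunLike.congr_fun hp ξ
    rw [sub_eq_zero.mp hξ]
    exact K.starProjection_apply_mem ξ
  exact Submodule.dense_iff_topologicalClosure_eq_top.mpr hKtop

end VonNeumannAlgebra

namespace StandardForm

variable {SF : StandardForm H}

theorem zero_mem_P : (0 : H) ∈ SF.P := by
  rw [SF.selfdual_P]
  intro η _
  simp

theorem add_mem_P {p q : H} (hp : p ∈ SF.P) (hq : q ∈ SF.P) : p + q ∈ SF.P := by
  have h := SF.cone_P 2 zero_le_two _ (SF.convex_P hp hq (by norm_num : (0:ℝ) ≤ 1/2)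
    (by norm_num : (0:ℝ) ≤ 1/2) (by norm_num))
  convert h using 1
  module

theorem sum_mem_P {ι : Type*} (s : Finset ι) {f : ι → H} (hf : ∀ i ∈ s, f i ∈ SF.P) :
    ∑ i ∈ s, f i ∈ SF.P :=
  Finset.sum_induction f (· ∈ SF.P) (fun _ _ => add_mem_P) zero_mem_P hf

theorem inner_nonneg_of_mem_P {p q : H} (hp : p ∈ SF.P) (hq : q ∈ SF.P) :
    0 ≤ (inner ℂ p q : ℂ) :=
  (SF.selfdual_P ▸ hp : p ∈ {ξ : H | ∀ η ∈ SF.P, 0 ≤ (inner ℂ ξ η : ℂ)}) q hq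

theorem eq_zero_of_mem_P_of_neg_mem_P {p : H} (hp : p ∈ SF.P) (hn : -p ∈ SF.P) : p = 0 := by
  have h := inner_nonneg_of_mem_P hp hn
  rw [inner_neg_right, neg_nonneg] at h
  exact re_inner_self_nonpos (𝕜 := ℂ) |>.mp (Complex.le_def.mp h).1

theorem mem_P_of_forall_pos_add_smul_mem {p q : H} (h : ∀ s : ℝ, 0 < s → p + s • q ∈ SF.P) :
    p ∈ SF.P := by
  have hcont : Continuous fun s : ℝ => p + s • q := by fun_prop
  have hlim := (hcont.tendsto' 0 p (by simp)).mono_left (nhdsWithin_le_nhds (s := Set.Ioi 0))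
  exact SF.closed_P.mem_of_tendsto hlim (eventually_nhdsWithin_of_forall h)

theorem J_smul (c : ℂ) (ξ : H) : SF.J (c • ξ) = starRingEnd ℂ c • SF.J ξ :=
  map_smulₛₗ SF.J c ξ

theorem J_real_smul (r : ℝ) (ξ : H) : SF.J (r • ξ) = r • SF.J ξ := by
  rw [← Complex.coe_smul, J_smul, Complex.conj_ofReal, Complex.coe_smul]

theorem J_eq_zero_iff {ξ : H} : SF.J ξ = 0 ↔ ξ = 0 := by
  rw [← norm_eq_zero, SF.isometry_J, norm_eq_zero]

variable (SF) in
def conjJ (x : H →L[ℂ] H) : H →L[ℂ] H :=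
  (SF.J.comp (x.toLinearMap.comp SF.J)).mkContinuous ‖x‖ fun ξ => by
    simpa [SF.isometry_J] using x.le_opNorm (SF.J ξ)

theorem conjJ_mem_commutant {x : H →L[ℂ] H} (hx : x ∈ SF.M) : SF.conjJ x ∈ SF.M.commutant :=
  (SF.commutant_JMJ _).mpr ⟨x, hx, fun _ => rfl⟩

theorem xJxJ_add_smul_one (x : H →L[ℂ] H) (c : ℂ) (ξ : H) :
    (x + c • 1) (SF.J ((x + c • 1) (SF.J ξ))) = x (SF.J (x (SF.J ξ))) +
      starRingEnd ℂ c • x ξ + c • SF.J (x (SF.J ξ)) + (c * starRingEnd ℂ c) • ξ := by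
  simp only [add_apply, smul_apply, one_apply_eq_self, map_add, J_smul, SF.involutive_J,
    map_smul]
  module

/- `(x + s u) J (x + s u) J ξ = s • (v u + s • |u|² ξ)` lies in `P` for all `s > 0`, so `v u ∈ P`;
as `v (-u) = -v u`, `v` vanishes, and `x ξ` is a combination of `v 1` and `v I`. -/
theorem apply_eq_zero_of_xJxJ_eq_zero {ξ : H} (hξ : ξ ∈ SF.P) {x : H →L[ℂ] H} (hx : x ∈ SF.M)
    (h0 : x (SF.J (x (SF.J ξ))) = 0) : x ξ = 0 := by
  set v : ℂ → H := fun u => starRingEnd ℂ u • x ξ + u • SF.J (x (SF.J ξ))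
  have hv : ∀ u, v u ∈ SF.P := fun u =>
    mem_P_of_forall_pos_add_smul_mem (q := (u * starRingEnd ℂ u) • ξ) fun s hs => by
      have h := SF.xJxJ_P _ (add_mem hx (SF.M.toStarSubalgebra.smul_mem (one_mem _) (s * u)))
        ξ hξ
      rw [xJxJ_add_smul_one, h0] at h
      convert SF.cone_P s⁻¹ (inv_nonneg.mpr hs.le) _ h using 1
      have hs' : (s : ℂ) ≠ 0 := by exact_mod_cast hs.ne'
      simp only [v, map_mul, Complex.conj_ofReal, zero_add]
      rw [← Complex.coe_smul, ← Complex.coe_smul]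
      simp only [smul_add, smul_smul]
      push_cast
      congr 2 <;> field_simp
  have hv0 : ∀ u, v u = 0 := fun u => by
    refine eq_zero_of_mem_P_of_neg_mem_P (hv u) ?_
    convert hv (-u) using 1
    simp only [v, map_neg, neg_smul]
    abel
  have h2I : (2 * Complex.I) • x ξ = Complex.I • v 1 - v Complex.I := by
    simp only [v, map_one, one_smul, Complex.conj_I]
    module
  rw [hv0, hv0, smul_zero, sub_zero] at h2I
  exact (smul_eq_zero.mp h2I).resolve_left (by simp)

theorem isSeparatingVector_add_smul {ξ₀ η : H} (hξ₀ : ξ₀ ∈ SF.P)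
    (hsep : SF.M.IsSeparatingVector ξ₀) (hη : η ∈ SF.P) {δ : ℝ} (hδ : 0 < δ) :
    SF.M.IsSeparatingVector (η + δ • ξ₀) := by
  intro x hx hxζ
  have hcomm := DFunLike.congr_fun
    (VonNeumannAlgebra.mem_commutant_iff.mp (conjJ_mem_commutant hx) x hx) (η + δ • ξ₀)
  have hsum : x (SF.J (x (SF.J η))) + δ • x (SF.J (x (SF.J ξ₀))) = 0 := by
    simpa [conjJ, J_real_smul, hxζ] using hcomm
  have hξ₀0 : δ • x (SF.J (x (SF.J ξ₀))) = 0 :=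
    eq_zero_of_mem_P_of_neg_mem_P (SF.cone_P δ hδ.le _ (SF.xJxJ_P x hx ξ₀ hξ₀))
      (neg_eq_of_add_eq_zero_left hsum ▸ SF.xJxJ_P x hx η hη)
  exact hsep x hx <| apply_eq_zero_of_xJxJ_eq_zero hξ₀ hx <|
    (smul_eq_zero.mp hξ₀0).resolve_left hδ.ne'

theorem isSeparatingVector_commutant {ζ : H} (hJ : SF.J ζ = ζ)
    (hsep : SF.M.IsSeparatingVector ζ) : SF.M.commutant.IsSeparatingVector ζ := by
  intro y hy hyζ
  obtain ⟨x, hx, hxy⟩ := (SF.commutant_JMJ y).mp hy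
  have hx0 : x = 0 := hsep x hx <| J_eq_zero_iff.mp <| by rw [← hJ, ← hxy, hyζ]
  ext ξ
  simp [hxy, hx0]

theorem isCyclicVector_add_smul {ξ₀ η : H} (hξ₀ : ξ₀ ∈ SF.P)
    (hsep : SF.M.IsSeparatingVector ξ₀) (hη : η ∈ SF.P) {δ : ℝ} (hδ : 0 < δ) :
    SF.M.IsCyclicVector (η + δ • ξ₀) :=
  VonNeumannAlgebra.isCyclicVector_of_isSeparatingVector_commutant <|
    isSeparatingVector_commutant (SF.J_fix_P _ (add_mem_P hη (SF.cone_P δ hδ.le _ hξ₀)))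
      (isSeparatingVector_add_smul hξ₀ hsep hη hδ)

theorem isCyclicVector_and_isSeparatingVector_add_norm_sub_smul {ξ₀ η : H} (hξ₀ : ξ₀ ∈ SF.P)
    (hcyc : SF.M.IsCyclicVector ξ₀) (hsep : SF.M.IsSeparatingVector ξ₀) (hη : η ∈ SF.P) :
    SF.M.IsCyclicVector (η + ‖η - ξ₀‖ • ξ₀) ∧ SF.M.IsSeparatingVector (η + ‖η - ξ₀‖ • ξ₀) := by
  rcases (norm_nonneg (η - ξ₀)).eq_or_lt with hδ | hδ
  · obtain rfl : η = ξ₀ := sub_eq_zero.mp (norm_eq_zero.mp hδ.symm)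
    simpa using ⟨hcyc, hsep⟩
  · exact ⟨isCyclicVector_add_smul hξ₀ hsep hη hδ, isSeparatingVector_add_smul hξ₀ hsep hη hδ⟩

theorem posSemidef_inner_of_mem_matrixCone {η : H} (hη : η ∈ SF.P) {n : ℕ}
    {ξ : Matrix (Fin n) (Fin n) H} (hξ : ξ ∈ SF.matrixCone n) :
    (Matrix.of fun i j => (inner ℂ η (ξ i j) : ℂ)).PosSemidef := by
  refine Matrix.posSemidef_of_dotProduct_mulVec_nonneg fun v => ?_
  have hmem := hξ (fun i => star (v i) • 1) fun i =>
    SF.M.toStarSubalgebra.smul_mem (one_mem _) _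
  convert inner_nonneg_of_mem_P hη hmem using 1
  simp only [dotProduct, Matrix.mulVec, Matrix.of_apply, Finset.mul_sum, smul_apply,
    one_apply_eq_self, J_smul, SF.involutive_J, map_smul, smul_smul, inner_sum, inner_smul_right,
    Pi.star_apply, RCLike.star_def, Complex.conj_conj]
  exact Finset.sum_congr rfl fun i _ => Finset.sum_congr rfl fun j _ => by ring

/- Writing `A = B⋆ B`, the sum is `∑ₖ yₖ J yₖ J ζ` with `yₖ = ∑ᵢ conj (Bₖᵢ) xᵢ ∈ M`. -/
open scoped MatrixOrder in
theorem sum_smul_xJxJ_mem_P_of_posSemidef {ι : Type*} [Fintype ι] {A : Matrix ι ι ℂ}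
    (hA : A.PosSemidef) {x : ι → H →L[ℂ] H} (hx : ∀ i, x i ∈ SF.M) {ζ : H} (hζ : ζ ∈ SF.P) :
    ∑ i, ∑ j, A i j • x i (SF.J (x j (SF.J ζ))) ∈ SF.P := by
  classical
  obtain ⟨B, rfl⟩ := CStarAlgebra.nonneg_iff_eq_star_mul_self.mp hA.nonneg
  let y : ι → H →L[ℂ] H := fun k => ∑ i, star (B k i) • x i
  have hy : ∀ k, y k ∈ SF.M := fun k =>
    sum_mem fun i _ => SF.M.toStarSubalgebra.smul_mem (hx i) _
  have hyy : ∀ k, y k (SF.J (y k (SF.J ζ))) =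
      ∑ i, ∑ j, (star (B k i) * B k j) • x i (SF.J (x j (SF.J ζ))) := fun k => by
    simp only [y, sum_apply, smul_apply, map_sum, J_smul, map_smul, Finset.smul_sum, smul_smul,
      RCLike.star_def, Complex.conj_conj]
    rw [Finset.sum_comm]
    exact Finset.sum_congr rfl fun _ _ => Finset.sum_congr rfl fun _ _ => by rw [mul_comm]
  convert sum_mem_P Finset.univ fun k _ => SF.xJxJ_P (y k) (hy k) ζ hζ using 1
  simp only [hyy, Matrix.mul_apply, Matrix.star_apply, Finset.sum_smul]
  exact (Finset.sum_congr rfl fun _ _ => Finset.sum_comm).trans Finset.sum_comm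

theorem isCompletelyPositive_rankOne {ζ η : H} (hζ : ζ ∈ SF.P) (hη : η ∈ SF.P) :
    IsCompletelyPositive SF SF (InnerProductSpace.rankOne ℂ ζ η) := by
  intro n ξ hξ x hx
  simpa [J_smul] using
    sum_smul_xJxJ_mem_P_of_posSemidef (posSemidef_inner_of_mem_matrixCone hη hξ) hx hζ

end StandardForm

section CompletelyPositive

variable {SF₁ : StandardForm H₁} {SF₂ : StandardForm H₂}

theorem IsCompletelyPositive.add {S T : H₁ →L[ℂ] H₂} (hS : IsCompletelyPositive SF₁ SF₂ S)
    (hT : IsCompletelyPositive SF₁ SF₂ T) : IsCompletelyPositive SF₁ SF₂ (S + T) := by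
  intro n ξ hξ x hx
  simpa only [Matrix.of_apply, add_apply, map_add, Finset.sum_add_distrib] using
    StandardForm.add_mem_P (hS n ξ hξ x hx) (hT n ξ hξ x hx)

theorem IsCompletelyPositive.smul_of_nonneg {T : H₁ →L[ℂ] H₂}
    (hT : IsCompletelyPositive SF₁ SF₂ T) {c : ℝ} (hc : 0 ≤ c) :
    IsCompletelyPositive SF₁ SF₂ ((c : ℂ) • T) := by
  intro n ξ hξ x hx
  simpa only [Matrix.of_apply, smul_apply, Complex.coe_smul, StandardForm.J_real_smul,
    ContinuousLinearMap.map_smul_of_tower, Finset.smul_sum] using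
    SF₂.cone_P c hc _ (hT n ξ hξ x hx)

theorem IsCompletelyPositive.apply_mem_P {T : H₁ →L[ℂ] H₂}
    (hT : IsCompletelyPositive SF₁ SF₂ T) {ξ : H₁} (hξ : ξ ∈ SF₁.P) : T ξ ∈ SF₂.P := by
  have hcone : Matrix.of (fun _ _ : Fin 1 => ξ) ∈ SF₁.matrixCone 1 := fun x hx => by
    simpa using SF₁.xJxJ_P (x 0) (hx 0) ξ hξ
  simpa [SF₂.involutive_J] using hT 1 _ hcone (fun _ => 1) (fun _ => one_mem _)

end CompletelyPositive

section RankOnePerturb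

variable {E : Type*} [NormedAddCommGroup E] [InnerProductSpace ℂ E]

def rankOnePerturb (T : E →L[ℂ] E) (ξ₀ : E) : E →L[ℂ] E :=
  T + InnerProductSpace.rankOne ℂ ((‖T ξ₀ - ξ₀‖ / ‖ξ₀‖ ^ 2) • ξ₀) ξ₀

-- Also true for `ξ₀ = 0`, where the division by `0` returns `0` and `‖T ξ₀ - ξ₀‖ = 0`.
theorem norm_sq_mul_div_norm_sq (T : E →L[ℂ] E) (ξ₀ : E) :
    ‖ξ₀‖ ^ 2 * (‖T ξ₀ - ξ₀‖ / ‖ξ₀‖ ^ 2) = ‖T ξ₀ - ξ₀‖ :=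
  mul_div_cancel_of_imp' fun h => by simp [norm_eq_zero.mp (pow_eq_zero_iff two_ne_zero |>.mp h)]

theorem rankOnePerturb_sub_apply (T : E →L[ℂ] E) (ξ₀ ξ : E) :
    (rankOnePerturb T ξ₀ - T) ξ = inner ℂ ξ₀ ξ • ((‖T ξ₀ - ξ₀‖ / ‖ξ₀‖ ^ 2) • ξ₀) := by
  simp only [rankOnePerturb, add_sub_cancel_left, InnerProductSpace.rankOne_apply]

theorem norm_rankOnePerturb_sub (T : E →L[ℂ] E) (ξ₀ : E) :
    ‖rankOnePerturb T ξ₀ - T‖ = ‖T ξ₀ - ξ₀‖ := by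
  rw [rankOnePerturb, add_sub_cancel_left, InnerProductSpace.norm_rankOne, norm_smul,
    Real.norm_of_nonneg (by positivity), mul_assoc, ← sq, mul_comm, norm_sq_mul_div_norm_sq]

theorem rankOnePerturb_apply_self (T : E →L[ℂ] E) (ξ₀ : E) :
    rankOnePerturb T ξ₀ ξ₀ = T ξ₀ + ‖T ξ₀ - ξ₀‖ • ξ₀ := by
  simp only [rankOnePerturb, add_apply, InnerProductSpace.rankOne_apply,
    inner_self_eq_norm_sq_to_K]
  rw [← RCLike.ofReal_pow, ← RCLike.real_smul_eq_coe_smul, smul_smul, norm_sq_mul_div_norm_sq]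

theorem norm_inv_one_add_norm_sub_smul_le_one {A B : E →L[ℂ] E} (hB : ‖B‖ ≤ 1) :
    ‖(((1 + ‖A - B‖)⁻¹ : ℝ) : ℂ) • A‖ ≤ 1 := by
  rw [norm_smul, Complex.norm_real, Real.norm_of_nonneg (by positivity),
    inv_mul_le_one₀ (by positivity)]
  calc ‖A‖ ≤ ‖B‖ + ‖A - B‖ := norm_le_norm_add_norm_sub' _ _
    _ ≤ 1 + ‖A - B‖ := by gcongr

theorem IsCompactOperator.rankOnePerturb {T : E →L[ℂ] E} (hT : IsCompactOperator T) (ξ₀ : E) :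
    IsCompactOperator (rankOnePerturb T ξ₀) :=
  hT.add (isCompactOperator_rankOne _ _)

end RankOnePerturb

theorem IsCompletelyPositive.rankOnePerturb {SF : StandardForm H} {T : H →L[ℂ] H}
    (hT : IsCompletelyPositive SF SF T) {ξ₀ : H} (hξ₀ : ξ₀ ∈ SF.P) :
    IsCompletelyPositive SF SF (rankOnePerturb T ξ₀) :=
  hT.add <| StandardForm.isCompletelyPositive_rankOne (SF.cone_P _ (by positivity) _ hξ₀) hξ₀

/-- Let `(M, H, J, P)` be a standard form of a σ-finite von Neumann
algebra with a cyclic and separating vector `ξ₀ ∈ P`.  Given a net `(Sₙ)` of completely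
positive operators on `H` with `Sₙ → 1` strongly, there is a net `(S′ₙ)` of completely
positive operators such that `S′ₙ → 1` strongly, `S′ₙ − Sₙ` is a rank one operator,
`‖S′ₙ − Sₙ‖ → 0` and each `S′ₙ ξ₀` is cyclic and separating.  In particular, if each `Sₙ`
is moreover a compact contraction, there is a net `(Tₙ)` of compact completely positive
contractions with `Tₙ → 1` strongly such that each `Tₙ ξ₀` is cyclic and separating. -/
theorem perturb_net_cyclicSeparating
    (SF : StandardForm H) (ξ₀ : H) (hξ₀P : ξ₀ ∈ SF.P)
    (hcyc : Dense {η : H | ∃ x ∈ SF.M, η = x ξ₀})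
    (hsep : ∀ x : H →L[ℂ] H, x ∈ SF.M → x ξ₀ = 0 → x = 0)
    (S : Net.{u} (H →L[ℂ] H))
    (hScp : ∀ n, IsCompletelyPositive SF SF (S.f n))
    (hSlim : ∀ ξ : H, Tendsto (fun n => S.f n ξ) atTop (𝓝 ξ)) :
    (∃ S' : S.ι → (H →L[ℂ] H),
      (∀ n, IsCompletelyPositive SF SF (S' n)) ∧
      (∀ ξ : H, Tendsto (fun n => S' n ξ) atTop (𝓝 ξ)) ∧
      (∀ n, ∃ a b : H, ∀ ξ : H, (S' n - S.f n) ξ = (inner ℂ a ξ : ℂ) • b) ∧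
      Tendsto (fun n => ‖S' n - S.f n‖) atTop (𝓝 (0 : ℝ)) ∧
      (∀ n, Dense {η : H | ∃ x ∈ SF.M, η = x (S' n ξ₀)} ∧
        ∀ x : H →L[ℂ] H, x ∈ SF.M → x (S' n ξ₀) = 0 → x = 0)) ∧
    ((∀ n, IsCompactOperator ⇑(S.f n) ∧ ‖S.f n‖ ≤ 1) →
      ∃ T : Net.{u} (H →L[ℂ] H),
        (∀ n, IsCompactOperator ⇑(T.f n) ∧ ‖T.f n‖ ≤ 1 ∧
          IsCompletelyPositive SF SF (T.f n)) ∧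
        (∀ ξ : H, Tendsto (fun n => T.f n ξ) atTop (𝓝 ξ)) ∧
        (∀ n, Dense {η : H | ∃ x ∈ SF.M, η = x (T.f n ξ₀)} ∧
          ∀ x : H →L[ℂ] H, x ∈ SF.M → x (T.f n ξ₀) = 0 → x = 0)) := by
  set S' : S.ι → H →L[ℂ] H := fun n => rankOnePerturb (S.f n) ξ₀
  have hδ : Tendsto (fun n => ‖S' n - S.f n‖) atTop (𝓝 0) := by
    simpa only [S', norm_rankOnePerturb_sub] using
      tendsto_iff_norm_sub_tendsto_zero.mp (hSlim ξ₀)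
  have hcp : ∀ n, IsCompletelyPositive SF SF (S' n) := fun n => (hScp n).rankOnePerturb hξ₀P
  have hlim : ∀ ξ, Tendsto (fun n => S' n ξ) atTop (𝓝 ξ) := fun ξ =>
    tendsto_apply_of_tendsto_norm_sub (hSlim ξ) hδ
  have hcs : ∀ n, SF.M.IsCyclicVector (S' n ξ₀) ∧ SF.M.IsSeparatingVector (S' n ξ₀) := fun n => by
    simpa only [S', rankOnePerturb_apply_self] using
      StandardForm.isCyclicVector_and_isSeparatingVector_add_norm_sub_smul hξ₀P hcyc hsep
        ((hScp n).apply_mem_P hξ₀P)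
  refine ⟨⟨S', hcp, hlim, fun n => ⟨ξ₀, _, rankOnePerturb_sub_apply _ _⟩, hδ, hcs⟩, fun hS => ?_⟩
  set r : S.ι → ℝ := fun n => (1 + ‖S' n - S.f n‖)⁻¹
  have hr : ∀ n, 0 < r n := fun n => inv_pos.mpr (by positivity)
  refine ⟨{ ι := S.ι, directed := S.directed, f := fun n => (r n : ℂ) • S' n },
    fun n => ⟨?_, ?_, ?_⟩, ?_, ?_⟩
  · exact ((hS n).1.rankOnePerturb ξ₀).smul _
  · exact norm_inv_one_add_norm_sub_smul_le_one (hS n).2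
  · exact (hcp n).smul_of_nonneg (hr n).le
  · intro ξ
    have hr1 : Tendsto r atTop (𝓝 1) := by
      simpa using (hδ.const_add 1).inv₀ (by norm_num)
    simpa using ((Complex.continuous_ofReal.tendsto 1).comp hr1).smul (hlim ξ)
  · intro n
    have hne : (r n : ℂ) ≠ 0 := Complex.ofReal_ne_zero.mpr (hr n).ne'
    exact ⟨(hcs n).1.smul hne, (hcs n).2.smul hne⟩
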